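/- arXiv:1504.03742 — 3 statements merged into one kernel-verified Lean document; each statement's English description precedes it below -/
import Mathlib

section
/- Let V be a finite-dimensional vector space over a field F, let T : V → V be a linear endomorphism, and let μ ∈ F be an eigenvalue of T that is a simple root (multiplicity one) of the minimal polynomial of T. Then there exists a polynomial p ∈ F[X] such that P := p(T) satisfies: P² = P, the range of P equals the eigenspace ker(T − μ·id), and the kernel of P equals the range of T − μ·id. In particular, the projection onto the μ-eigenspace of T along the complementary T-invariant subspace can be written as a polynomial in T. -/
open Polynomial

/-- Let `V` be a finite-dimensional vector space over a field `F`, let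
`T : V → V` be linear, and let `μ` be an eigenvalue of `T` that is a simple root of the
minimal polynomial of `T`.  Then some polynomial `p ∈ F[X]` evaluated at `T` gives an
idempotent `P = p(T)` whose range is the eigenspace `ker (T - μ·id)` and whose kernel is
`range (T - μ·id)`:  the projection onto the `μ`-eigenspace along the complementary
`T`-invariant subspace is a polynomial in `T`. -/
theorem eigenprojection_is_polynomial_in_T
    {F V : Type*} [Field F] [AddCommGroup V] [Module F V] [FiniteDimensional F V]
    (T : Module.End F V) (μ : F)
    (hev : Module.End.HasEigenvalue T μ)
    (hdvd : (X - C μ) ∣ minpoly F T)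
    (hsimple : ¬ (X - C μ) ^ 2 ∣ minpoly F T) :
    ∃ p : Polynomial F,
      (Polynomial.aeval T p) * (Polynomial.aeval T p) = Polynomial.aeval T p ∧
      LinearMap.range (Polynomial.aeval T p)
        = LinearMap.ker (T - μ • (1 : Module.End F V)) ∧
      LinearMap.ker (Polynomial.aeval T p)
        = LinearMap.range (T - μ • (1 : Module.End F V)) := by
  obtain ⟨q, hq⟩ := hdvd
  have hndvd : ¬ (X - C μ) ∣ q := by
    intro ⟨r, hr⟩
    exact hsimple ⟨r, by rw [hq, hr]; ring⟩
  have hcop : IsCoprime (X - C μ) q :=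
    (Polynomial.irreducible_X_sub_C μ).coprime_iff_not_dvd.mpr hndvd
  obtain ⟨a, b, hab⟩ := hcop
  have hmin : aeval T (minpoly F T) = 0 := minpoly.aeval F T
  have hXT : aeval T (X - C μ) = T - μ • (1 : Module.End F V) := by
    simp [Algebra.algebraMap_eq_smul_one]
  have hTq : (T - μ • (1 : Module.End F V)) * aeval T (b * q) = 0 := by
    rw [← hXT, ← map_mul]
    have : (X - C μ) * (b * q) = b * minpoly F T := by rw [hq]; ring
    rw [this, map_mul, hmin, mul_zero]
  have hqT : aeval T (b * q) * (T - μ • (1 : Module.End F V)) = 0 := by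
    rw [← hXT, ← map_mul]
    have : b * q * (X - C μ) = b * minpoly F T := by rw [hq]; ring
    rw [this, map_mul, hmin, mul_zero]
  have hsum : aeval T (a * (X - C μ)) + aeval T (b * q) = 1 := by
    rw [← map_add, hab, map_one]
  refine ⟨b * q, ?_, ?_, ?_⟩
  · -- idempotent
    have : aeval T (b * q) * aeval T (b * q)
        = aeval T (b * q) * (aeval T (a * (X - C μ)) + aeval T (b * q))
          - aeval T (b * q) * aeval T (a * (X - C μ)) := by
        rw [mul_add, add_sub_cancel_left]
    rw [this, hsum, mul_one]
    have h0 : aeval T (b * q) * aeval T (a * (X - C μ)) = 0 := by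
      rw [← map_mul]
      have : b * q * (a * (X - C μ)) = a * b * minpoly F T := by rw [hq]; ring
      rw [this, map_mul, hmin, mul_zero]
    rw [h0, sub_zero]
  · -- range
    apply le_antisymm
    · rintro _ ⟨v, rfl⟩
      have := congrArg (fun f => f v) hTq
      simpa using this
    · intro v hv
      have hv' : (T - μ • (1 : Module.End F V)) v = 0 := hv
      refine ⟨v, ?_⟩
      have := congrArg (fun f => f v) hsum
      simp only [LinearMap.add_apply, Module.End.one_apply] at this
      have h0 : aeval T (a * (X - C μ)) v = 0 := by
        rw [map_mul, Module.End.mul_apply, hXT, hv', map_zero]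
      rw [h0, zero_add] at this
      exact this
  · -- kernel
    apply le_antisymm
    · intro v hv
      have hv' : aeval T (b * q) v = 0 := hv
      have := congrArg (fun f => f v) hsum
      simp only [LinearMap.add_apply, Module.End.one_apply] at this
      rw [hv', add_zero] at this
      refine ⟨aeval T a v, ?_⟩
      have : aeval T (a * (X - C μ)) v = v := this
      rw [map_mul, Module.End.mul_apply, hXT] at this
      have hcomm : (T - μ • (1 : Module.End F V)) * aeval T a
          = aeval T a * (T - μ • (1 : Module.End F V)) := by
        rw [← hXT, ← map_mul, ← map_mul, mul_comm]
      calc (T - μ • (1 : Module.End F V)) (aeval T a v)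
          = ((T - μ • (1 : Module.End F V)) * aeval T a) v := rfl
        _ = (aeval T a * (T - μ • (1 : Module.End F V))) v := by rw [hcomm]
        _ = aeval T a ((T - μ • (1 : Module.End F V)) v) := rfl
        _ = v := this
    · rintro _ ⟨v, rfl⟩
      have := congrArg (fun f => f v) hqT
      simpa using this
end

section
/- Let F be a field, let V₁,…,V_d be finite-dimensional F-vector spaces with V = V₁ ⊕ ⋯ ⊕ V_d, let Tᵢ : Vᵢ → Vᵢ be linear endomorphisms, and let T = T₁ ⊕ ⋯ ⊕ T_d : V → V. Fix an index i and let W ⊆ V be a T-invariant subspace whose projection to the i-th summand is all of Vᵢ. Let μ ∈ F be an eigenvalue of T of algebraic multiplicity one (a simple root of the characteristic polynomial of T) such that μ is an eigenvalue of Tᵢ. Then W contains a nonzero vector v whose component in V_j is zero for every j ≠ i (namely, an eigenvector of T with eigenvalue μ, supported in the i-th summand). -/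
/-!
Let `χ` be the characteristic polynomial of `T = T₁ ⊕ ⋯ ⊕ T_d` and `q = χ / (X - μ)`.
By Cayley–Hamilton, `q(T) w` is a `μ`-eigenvector of `T` (or zero) for every `w`, and it lies in
`W` when `w` does. Take `w ∈ W` whose `i`-th component is a `μ`-eigenvector `x` of `Tᵢ`; then the
`i`-th component of `q(T) w` is `q(μ) x`, nonzero because `μ` is a simple root of `χ`. Finally the
`μ`-eigenspace of `T` has dimension at most the algebraic multiplicity `1`, so it is spanned by
`Pi.single i x`, and `q(T) w` is supported in the `i`-th summand.
-/

open Polynomial Module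

namespace LinearMap

variable {R : Type*} [CommSemiring R]

theorem comp_aeval_of_comp_eq {M N : Type*} [AddCommMonoid M] [Module R M] [AddCommMonoid N]
    [Module R N] {π : M →ₗ[R] N} {f : End R M} {g : End R N} (h : g ∘ₗ π = π ∘ₗ f)
    (p : R[X]) : aeval g p ∘ₗ π = π ∘ₗ aeval f p := by
  induction p using Polynomial.induction_on' with
  | add p q hp hq => rw [map_add, map_add, add_comp, comp_add, hp, hq]
  | monomial n a =>
    rw [aeval_monomial, aeval_monomial, ← Algebra.smul_def, ← Algebra.smul_def, smul_comp,
      comp_smul, End.commute_pow_left_of_commute h]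

theorem aeval_piMap_apply {ι : Type*} {M : ι → Type*} [∀ i, AddCommMonoid (M i)]
    [∀ i, Module R (M i)] (T : ∀ i, End R (M i)) (p : R[X]) (v : ∀ i, M i) (i : ι) :
    aeval (piMap T) p v i = aeval (T i) p (v i) :=
  LinearMap.congr_fun (comp_aeval_of_comp_eq (π := proj i) rfl p).symm v

end LinearMap

namespace Module.End

variable {K : Type*} [Field K]

theorem aeval_divByMonic_mem_eigenspace {M : Type*} [AddCommGroup M] [Module K M]
    {f : End K M} {p : K[X]} (hp : aeval f p = 0) {μ : K} (hμ : p.IsRoot μ) (v : M) :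
    aeval f (p /ₘ (X - C μ)) v ∈ f.eigenspace μ := by
  have hfac := congrArg (aeval f) (mul_divByMonic_eq_iff_isRoot.mpr hμ)
  rw [hp, map_mul] at hfac
  rw [mem_eigenspace_iff, ← sub_eq_zero]
  simpa [Module.algebraMap_end_apply] using LinearMap.congr_fun hfac v

theorem HasEigenvector.exists_smul_eq_of_rootMultiplicity_le_one {M : Type*} [AddCommGroup M]
    [Module K M] [FiniteDimensional K M] {f : End K M} {μ : K}
    (hμ : f.charpoly.rootMultiplicity μ ≤ 1) {e u : M} (he : f.HasEigenvector μ e)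
    (hu : u ∈ f.eigenspace μ) : ∃ c : K, c • e = u := by
  have hone : finrank K (f.eigenspace μ) = 1 :=
    le_antisymm ((LinearMap.finrank_eigenspace_le f μ).trans hμ)
      (Submodule.one_le_finrank_iff.mpr (hasEigenvalue_of_hasEigenvector he))
  obtain ⟨c, hc⟩ := (finrank_eq_one_iff_of_nonzero' (⟨e, he.1⟩ : f.eigenspace μ)
    (Subtype.coe_ne_coe.mp he.2)).mp hone ⟨u, hu⟩
  exact ⟨c, congrArg Subtype.val hc⟩

theorem HasEigenvector.piMap_single {ι : Type*} [DecidableEq ι] {M : ι → Type*}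
    [∀ i, AddCommGroup (M i)] [∀ i, Module K (M i)] {T : ∀ i, End K (M i)} {i : ι} {μ : K}
    {x : M i} (hx : (T i).HasEigenvector μ x) :
    HasEigenvector (LinearMap.piMap T) μ (Pi.single i x) := by
  refine ⟨mem_eigenspace_iff.mpr ?_, by simpa using hx.2⟩
  ext j
  rcases eq_or_ne j i with rfl | hj
  · simpa using mem_eigenspace_iff.mp hx.1
  · simp [hj]

end Module.End

theorem exists_supported_eigenvector_in_invariant_subspace_general
    (F : Type*) [Field F] {d : ℕ} (V : Fin d → Type*)
    [∀ i, AddCommGroup (V i)] [∀ i, Module F (V i)] [∀ i, FiniteDimensional F (V i)]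
    (T : ∀ i, V i →ₗ[F] V i) (i : Fin d) (W : Submodule F (∀ j, V j))
    (hWinv : ∀ w ∈ W, (LinearMap.pi fun j => (T j).comp (LinearMap.proj j)) w ∈ W)
    (hWproj : Submodule.map (LinearMap.proj i : (∀ j, V j) →ₗ[F] V i) W = ⊤)
    (μ : F)
    (hmult : ((LinearMap.pi fun j => (T j).comp (LinearMap.proj j)) :
        Module.End F (∀ j, V j)).charpoly.rootMultiplicity μ = 1)
    (hevi : Module.End.HasEigenvalue (T i) μ) :
    ∃ v ∈ W, v ≠ 0 ∧ (∀ j : Fin d, j ≠ i → v j = 0) ∧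
      (LinearMap.pi fun j => (T j).comp (LinearMap.proj j)) v = μ • v := by
  set χ := (LinearMap.piMap T).charpoly
  change χ.rootMultiplicity μ = 1 at hmult
  have hχ : χ ≠ 0 := (LinearMap.charpoly_monic _).ne_zero
  set q := χ /ₘ (X - C μ)
  obtain ⟨x, hx⟩ := hevi.exists_hasEigenvector
  obtain ⟨w, hwW, hwx : w i = x⟩ : x ∈ W.map (LinearMap.proj i) := hWproj ▸ Submodule.mem_top
  have hroot : χ.IsRoot μ := (rootMultiplicity_pos hχ).mp (hmult ▸ one_pos)
  have hqμ : q.eval μ ≠ 0 := by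
    simpa [hmult] using eval_divByMonic_pow_rootMultiplicity_ne_zero μ hχ
  have hu : aeval (LinearMap.piMap T) q w ∈ End.eigenspace (LinearMap.piMap T) μ :=
    End.aeval_divByMonic_mem_eigenspace (LinearMap.aeval_self_charpoly _) hroot w
  have hui : aeval (LinearMap.piMap T) q w i = q.eval μ • x := by
    rw [LinearMap.aeval_piMap_apply, hwx, End.aeval_apply_of_hasEigenvector hx]
  obtain ⟨c, hc⟩ := hx.piMap_single.exists_smul_eq_of_rootMultiplicity_le_one hmult.le hu
  refine ⟨aeval (LinearMap.piMap T) q w, aeval_apply_smul_mem_of_le_comap hwW q _ hWinv,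
    fun h0 => smul_ne_zero hqμ hx.2 (by rw [← hui, h0, Pi.zero_apply]), fun j hj => ?_,
    End.mem_eigenspace_iff.mp hu⟩
  rw [← hc, Pi.smul_apply, Pi.single_eq_of_ne hj, smul_zero]

/-- Let `V = V₁ ⊕ ⋯ ⊕ V_d` with `T = T₁ ⊕ ⋯ ⊕ T_d`, let `W ⊆ V` be a
`T`-invariant subspace whose projection to the `i`-th summand is all of `Vᵢ`, and let `μ`
be an eigenvalue of `T` of algebraic multiplicity one (a simple root of the characteristic
polynomial of `T`) which is an eigenvalue of `Tᵢ`.  Then `W` contains a nonzero vector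
supported in the `i`-th summand, namely an eigenvector of `T` with eigenvalue `μ`. -/
theorem exists_supported_eigenvector_in_invariant_subspace
    (F : Type*) [Field F] {d : ℕ} (V : Fin d → Type*)
    [∀ i, AddCommGroup (V i)] [∀ i, Module F (V i)] [∀ i, FiniteDimensional F (V i)]
    (T : ∀ i, V i →ₗ[F] V i) (i : Fin d) (W : Submodule F (∀ j, V j))
    (hWinv : ∀ w ∈ W, (LinearMap.pi fun j => (T j).comp (LinearMap.proj j)) w ∈ W)
    (hWproj : Submodule.map (LinearMap.proj i : (∀ j, V j) →ₗ[F] V i) W = ⊤)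
    (μ : F)
    (hev : Module.End.HasEigenvalue
      ((LinearMap.pi fun j => (T j).comp (LinearMap.proj j)) : Module.End F (∀ j, V j)) μ)
    (hmult : ((LinearMap.pi fun j => (T j).comp (LinearMap.proj j)) :
        Module.End F (∀ j, V j)).charpoly.rootMultiplicity μ = 1)
    (hevi : Module.End.HasEigenvalue (T i) μ) :
    ∃ v ∈ W, v ≠ 0 ∧ (∀ j : Fin d, j ≠ i → v j = 0) ∧
      (LinearMap.pi fun j => (T j).comp (LinearMap.proj j)) v = μ • v :=
  exists_supported_eigenvector_in_invariant_subspace_general F V T i W hWinv hWproj μ hmult hevi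
end

section
/- Let Γ be a subgroup of SL(2,ℂ) that contains no solvable subgroup of finite index. Then the conjugation action of Γ on sl(2,ℂ) is irreducible: the only complex subspaces U ⊆ sl(2,ℂ) with gUg⁻¹ ⊆ U for all g ∈ Γ are U = 0 and U = sl(2,ℂ). -/
/-!
A proper nonzero `Γ`-invariant subspace `U` of `sl(2,ℂ)` yields a `Γ`-invariant line: `U` itself,
or, when `U` is a plane with basis `A, B`, the line through `⁅A, B⁆`, on which `Ad g` acts by the
determinant of `Ad g` on `U`.
The matrices commuting with a nonzero traceless `2 × 2` matrix `X` are the `a • X + b • 1`; they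
commute with each other, and `⁅A, B⁆ ≠ 0`. Hence the elements of `Γ` acting trivially on an
invariant line `ℂ ∙ X` form an abelian normal subgroup with abelian quotient (a subgroup of `ℂˣ`),
so `Γ` is solvable.
-/

/-- `sl(2,ℂ)`: trace-zero `2 × 2` complex matrices. -/
noncomputable def sl2 : Submodule ℂ (Matrix (Fin 2) (Fin 2) ℂ) :=
  LinearMap.ker (Matrix.traceLinearMap (Fin 2) ℂ ℂ)

/-- The adjoint (conjugation) operator `Ad g : X ↦ g X g⁻¹` of `g ∈ SL(2,ℂ)` on `sl(2,ℂ)`. -/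
noncomputable def Ad (g : Matrix.SpecialLinearGroup (Fin 2) ℂ) : sl2 →ₗ[ℂ] sl2 where
  toFun X := ⟨(g : Matrix (Fin 2) (Fin 2) ℂ) * X.1
      * ((g⁻¹ : Matrix.SpecialLinearGroup (Fin 2) ℂ) : Matrix (Fin 2) (Fin 2) ℂ), by
    have hX : Matrix.trace X.1 = 0 := X.2
    have h1 : ((g⁻¹ : Matrix.SpecialLinearGroup (Fin 2) ℂ) : Matrix (Fin 2) (Fin 2) ℂ)
        * (g : Matrix (Fin 2) (Fin 2) ℂ) = 1 := by
      rw [← Matrix.SpecialLinearGroup.coe_mul, inv_mul_cancel,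
        Matrix.SpecialLinearGroup.coe_one]
    simp only [sl2, LinearMap.mem_ker, Matrix.traceLinearMap_apply]
    rw [Matrix.trace_mul_cycle, h1, one_mul, hX]⟩
  map_add' X Y := Subtype.ext (by simp [Matrix.mul_add, Matrix.add_mul])
  map_smul' c X := Subtype.ext (by simp [Matrix.mul_smul, Matrix.smul_mul])

namespace Matrix

variable {K : Type*} [Field K]

theorem exists_eq_smul_add_smul_one_of_commute {X A : Matrix (Fin 2) (Fin 2) K}
    (hX : ∀ c : K, X ≠ c • 1) (hA : Commute A X) : ∃ a b : K, A = a • X + b • 1 := by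
  have e00 := congrFun₂ hA.eq 0 0
  have e01 := congrFun₂ hA.eq 0 1
  have e10 := congrFun₂ hA.eq 1 0
  simp only [mul_apply, Fin.sum_univ_two] at e00 e01 e10
  have hX_entry : X 0 1 ≠ 0 ∨ X 1 0 ≠ 0 ∨ X 0 0 - X 1 1 ≠ 0 := by
    by_contra! h
    refine hX (X 0 0) (ext fun i j => ?_)
    fin_cases i <;> fin_cases j <;> simp [h.1, h.2.1, sub_eq_zero.mp h.2.2]
  suffices ∃ a : K, A 0 1 = a * X 0 1 ∧ A 1 0 = a * X 1 0 ∧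
      A 0 0 - A 1 1 = a * (X 0 0 - X 1 1) by
    obtain ⟨a, h01, h10, hdiag⟩ := this
    refine ⟨a, A 0 0 - a * X 0 0, ext fun i j => ?_⟩
    fin_cases i <;> fin_cases j <;> simp [h01, h10]
    linear_combination -hdiag
  rcases hX_entry with h | h | h
  · refine ⟨A 0 1 / X 0 1, (div_mul_cancel₀ _ h).symm, ?_, ?_⟩ <;>
      rw [div_mul_eq_mul_div, eq_div_iff h]
    · linear_combination -e00
    · linear_combination e01
  · refine ⟨A 1 0 / X 1 0, ?_, (div_mul_cancel₀ _ h).symm, ?_⟩ <;>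
      rw [div_mul_eq_mul_div, eq_div_iff h]
    · linear_combination e00
    · linear_combination -e10
  · refine ⟨(A 0 0 - A 1 1) / (X 0 0 - X 1 1), ?_, ?_, (div_mul_cancel₀ _ h).symm⟩ <;>
      rw [div_mul_eq_mul_div, eq_div_iff h]
    · linear_combination -e01
    · linear_combination e10

theorem commute_of_commute_of_ne_smul_one {X A B : Matrix (Fin 2) (Fin 2) K}
    (hX : ∀ c : K, X ≠ c • 1) (hA : Commute A X) (hB : Commute B X) : Commute A B := by
  obtain ⟨a, b, rfl⟩ := exists_eq_smul_add_smul_one_of_commute hX hA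
  obtain ⟨c, d, rfl⟩ := exists_eq_smul_add_smul_one_of_commute hX hB
  simp only [Commute, SemiconjBy, add_mul, mul_add, smul_mul_smul_comm, one_mul, mul_one]
  module

theorem ne_smul_one_of_trace_eq_zero [NeZero (2 : K)] {X : Matrix (Fin 2) (Fin 2) K}
    (htr : X.trace = 0) (hX : X ≠ 0) (c : K) : X ≠ c • 1 := by
  rintro rfl
  have : c * 2 = 0 := by simpa using htr
  simp_all

theorem lie_ne_zero_of_linearIndependent [NeZero (2 : K)] {v : Fin 2 → Matrix (Fin 2) (Fin 2) K}
    (hv : LinearIndependent K v) (htr : ∀ i, (v i).trace = 0) : ⁅v 0, v 1⁆ ≠ 0 := by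
  rw [linearIndependent_fin2] at hv
  intro hlie
  obtain ⟨a, b, hab⟩ := exists_eq_smul_add_smul_one_of_commute
    (ne_smul_one_of_trace_eq_zero (htr 1) hv.1) (sub_eq_zero.mp (Ring.lie_def (v 0) (v 1) ▸ hlie))
  have hb : b = 0 := by
    simpa [hab, trace_add, trace_smul, htr 1, two_ne_zero] using htr 0
  exact hv.2 a (by rw [hab, hb, zero_smul, add_zero])

end Matrix

theorem LinearMap.commute_of_finrank_eq_one {R M : Type*} [CommSemiring R] [StrongRankCondition R]
    [AddCommMonoid M] [Module R M] [Module.Free R M] (hM : Module.finrank R M = 1)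
    (u v : M →ₗ[R] M) : Commute u v := by
  obtain ⟨a, rfl, -⟩ := u.existsUnique_eq_smul_id_of_finrank_eq_one hM
  obtain ⟨b, rfl, -⟩ := v.existsUnique_eq_smul_id_of_finrank_eq_one hM
  exact ((Commute.refl LinearMap.id).smul_left a).smul_right b

theorem Representation.isSolvable_of_finrank_eq_one {k G V : Type*} [CommSemiring k]
    [StrongRankCondition k] [Group G] [AddCommMonoid V] [Module k V] [Module.Free k V]
    (ρ : Representation k G V) (hV : Module.finrank k V = 1)
    (hker : ∀ g h : G, ρ g = 1 → ρ h = 1 → Commute g h) : Group.IsSolvable G := by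
  let χ := ρ.toHomUnits
  have : Group.IsSolvable (V →ₗ[k] V)ˣ := Group.isSolvable_of_comm fun u v =>
    Units.ext (LinearMap.commute_of_finrank_eq_one hV u v).eq
  have : Group.IsSolvable χ.ker := Group.isSolvable_of_comm fun g h =>
    Subtype.ext (hker g h (Units.ext_iff.mp g.2) (Units.ext_iff.mp h.2)).eq
  exact Group.isSolvable_of_ker_le_range χ.ker.subtype χ (by simp)

theorem Ring.lie_smul_add_smul_smul_add_smul {R A : Type*} [CommRing R] [Ring A] [Algebra R A]
    (x y : A) (a b c d : R) : ⁅a • x + b • y, c • x + d • y⁆ = (a * d - b * c) • ⁅x, y⁆ := by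
  simp only [Ring.lie_def, add_mul, mul_add, smul_mul_smul_comm]
  module

namespace Matrix.SpecialLinearGroup

variable {n R : Type*} [Fintype n] [DecidableEq n] [CommRing R]

local notation:1024 "↑ₘ" A:1024 => ((A : SpecialLinearGroup n R) : Matrix n n R)

theorem coe_inv_mul_cancel_left (g : SpecialLinearGroup n R) (X : Matrix n n R) :
    ↑ₘ(g⁻¹) * (↑ₘg * X) = X := by
  rw [← Matrix.mul_assoc, ← coe_mul, inv_mul_cancel, coe_one, Matrix.one_mul]

theorem conj_lie (g : SpecialLinearGroup n R) (X Y : Matrix n n R) :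
    ↑ₘg * ⁅X, Y⁆ * ↑ₘ(g⁻¹) = ⁅↑ₘg * X * ↑ₘ(g⁻¹), ↑ₘg * Y * ↑ₘ(g⁻¹)⁆ := by
  simp only [Ring.lie_def, Matrix.mul_sub, Matrix.sub_mul, Matrix.mul_assoc,
    coe_inv_mul_cancel_left]

theorem conj_eq_self_iff (g : SpecialLinearGroup n R) (X : Matrix n n R) :
    ↑ₘg * X * ↑ₘ(g⁻¹) = X ↔ Commute ↑ₘg X :=
  Units.mul_inv_eq_iff_eq_mul (toGL g)

end Matrix.SpecialLinearGroup

theorem Matrix.finrank_ker_traceLinearMap {n K : Type*} [Fintype n] [Nonempty n] [Field K] :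
    Module.finrank K (LinearMap.ker (traceLinearMap n K K)) + 1 =
      Fintype.card n * Fintype.card n := by
  have h := LinearMap.finrank_range_add_finrank_ker (traceLinearMap n K K)
  rw [LinearMap.range_eq_top.mpr trace_surjective, finrank_top, Module.finrank_matrix,
    Module.finrank_self, mul_one] at h
  omega

open Matrix.SpecialLinearGroup
open scoped MatrixGroups

local notation "M₂" => Matrix (Fin 2) (Fin 2) ℂ

theorem finrank_sl2 : Module.finrank ℂ sl2 = 3 := by
  have := Matrix.finrank_ker_traceLinearMap (n := Fin 2) (K := ℂ)
  simp only [Fintype.card_fin] at this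
  unfold sl2
  omega

theorem mem_sl2 {X : M₂} : X ∈ sl2 ↔ X.trace = 0 := Iff.rfl

theorem trace_coe_sl2 (X : sl2) : (X : M₂).trace = 0 := X.2

theorem coe_Ad_apply (g : SL(2, ℂ)) (X : sl2) :
    (Ad g X : M₂) = g * X * ((g⁻¹ : SL(2, ℂ)) : M₂) :=
  rfl

noncomputable def adRep : Representation ℂ SL(2, ℂ) sl2 where
  toFun := Ad
  map_one' := by ext X : 1; exact Subtype.ext (by simp [coe_Ad_apply])
  map_mul' g h := by ext X : 1; exact Subtype.ext (by simp [coe_Ad_apply, Matrix.mul_assoc])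

theorem isSolvable_of_invariant_line (Γ : Subgroup SL(2, ℂ)) (L : Submodule ℂ sl2)
    (hL : Module.finrank ℂ L = 1) (hΓL : ∀ g ∈ Γ, ∀ x ∈ L, Ad g x ∈ L) : Group.IsSolvable Γ := by
  let ρ : Subrepresentation (adRep.comp Γ.subtype) := ⟨L, fun g _ hx => hΓL g g.2 _ hx⟩
  obtain ⟨X, hXL, hX⟩ := Submodule.exists_mem_ne_zero_of_ne_bot (p := L) (by rintro rfl; simp at hL)
  have hX_ne_scalar := Matrix.ne_smul_one_of_trace_eq_zero (trace_coe_sl2 X)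
    (Submodule.coe_eq_zero.not.mpr hX)
  have commute_X (g : Γ) (hg : ρ.toRepresentation g = 1) :
      Commute ((g : SL(2, ℂ)) : M₂) X :=
    (conj_eq_self_iff _ _).mp (congrArg (fun x : L => ((x : sl2) : M₂))
      (LinearMap.congr_fun hg ⟨X, hXL⟩))
  have : Module.Free ℂ ρ.toSubmodule := Module.Free.of_divisionRing ℂ L
  refine ρ.toRepresentation.isSolvable_of_finrank_eq_one hL fun g h hg hh => ?_
  exact Subtype.ext (Subtype.ext
    (Matrix.commute_of_commute_of_ne_smul_one hX_ne_scalar (commute_X g hg) (commute_X h hh)).eq)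

theorem exists_line_invariant_of_finrank_eq_two {U : Submodule ℂ sl2}
    (hU : Module.finrank ℂ U = 2) :
    ∃ L : Submodule ℂ sl2, Module.finrank ℂ L = 1 ∧
      ∀ g : SL(2, ℂ), (∀ u ∈ U, Ad g u ∈ U) → ∀ x ∈ L, Ad g x ∈ L := by
  have : Module.Free ℂ U := Module.Free.of_divisionRing ℂ U
  have : Module.Finite ℂ U := Module.finite_of_finrank_eq_succ hU
  let b := Module.finBasisOfFinrankEq ℂ U hU
  let A : sl2 := b 0
  let B : sl2 := b 1
  have mem_span (u : sl2) (hu : u ∈ U) : ∃ α β : ℂ, α • A + β • B = u :=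
    ⟨b.repr ⟨u, hu⟩ 0, b.repr ⟨u, hu⟩ 1, by
      simpa only [Fin.sum_univ_two, Submodule.coe_add, Submodule.coe_smul] using
        congrArg Subtype.val (b.sum_repr ⟨u, hu⟩)⟩
  let C : sl2 := ⟨⁅(A : M₂), B⁆,
    mem_sl2.2 (LieAlgebra.matrix_trace_commutator_zero _ _ _ _)⟩
  have hC : C ≠ 0 := fun h => Matrix.lie_ne_zero_of_linearIndependent
    (b.linearIndependent.map_injOn (sl2.subtype ∘ₗ U.subtype)
      (Subtype.val_injective.comp Subtype.val_injective).injOn)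
    (fun i => trace_coe_sl2 (b i)) (congrArg Subtype.val h)
  refine ⟨ℂ ∙ C, finrank_span_singleton hC, fun g hg x hx => ?_⟩
  obtain ⟨c, rfl⟩ := Submodule.mem_span_singleton.mp hx
  obtain ⟨α, β, hA⟩ := mem_span _ (hg A (b 0).2)
  obtain ⟨γ, δ, hB⟩ := mem_span _ (hg B (b 1).2)
  have hAd : (Ad g C : M₂) =
      ⁅((α • A + β • B : sl2) : M₂), ((γ • A + δ • B : sl2) : M₂)⁆ := by
    rw [hA, hB]
    exact conj_lie g A B
  rw [map_smul]
  refine Submodule.smul_mem _ c (Submodule.mem_span_singleton.mpr ⟨α * δ - β * γ, Subtype.ext ?_⟩)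
  simp only [hAd, Submodule.coe_smul, Submodule.coe_add]
  exact (Ring.lie_smul_add_smul_smul_add_smul _ _ _ _ _ _).symm

/-- If `Γ ⊆ SL(2,ℂ)` contains no solvable subgroup of finite index, then the
conjugation action of `Γ` on `sl(2,ℂ)` is irreducible: the only `Γ`-invariant complex
subspaces of `sl(2,ℂ)` are `0` and `sl(2,ℂ)`. -/
theorem adjoint_action_irreducible (Γ : Subgroup (Matrix.SpecialLinearGroup (Fin 2) ℂ))
    (hΓ : ¬ ∃ H : Subgroup Γ, H.FiniteIndex ∧ IsSolvable H)
    (U : Submodule ℂ sl2) (hU : ∀ g ∈ Γ, ∀ u ∈ U, Ad g u ∈ U) :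
    U = ⊥ ∨ U = ⊤ := by
  by_contra! hU_proper
  obtain ⟨L, hL, hΓL⟩ : ∃ L : Submodule ℂ sl2, Module.finrank ℂ L = 1 ∧
      ∀ g ∈ Γ, ∀ x ∈ L, Ad g x ∈ L := by
    have h_pos : 0 < Module.finrank ℂ U :=
      Nat.pos_of_ne_zero (Submodule.finrank_eq_zero.not.mpr hU_proper.1)
    have h_lt : Module.finrank ℂ U < 3 := finrank_sl2 ▸ Submodule.finrank_lt hU_proper.2
    interval_cases h : Module.finrank ℂ U
    · exact ⟨U, h, hU⟩
    · obtain ⟨L, hL, hL_inv⟩ := exists_line_invariant_of_finrank_eq_two h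
      exact ⟨L, hL, fun g hg => hL_inv g (hU g hg)⟩
  have := isSolvable_of_invariant_line Γ L hL hΓL
  exact hΓ ⟨⊤, inferInstance, (inferInstance : Group.IsSolvable (⊤ : Subgroup Γ))⟩
end
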